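/- arXiv:2602.13138 — 2 statements merged into one kernel-verified Lean document; each statement's English description precedes it below -/
import Mathlib

section
/- Let T be a basic tilting A_t-module with quasi-hereditary decomposition T = T_t ⊕ ⋯ ⊕ T_1, where T_i = e_i T for the primitive orthogonal idempotents e_1,...,e_t of A_t. Then for each i ∈ {2,...,t}, the map h_{i−1} : T_{i−1} → T_i given by left multiplication by the arrow b_i is a minimal right add(⊕_{j<i} T_j)-approximation of T_i, and it is a monomorphism. -/
set_option maxHeartbeats 1000000
set_option synthInstance.maxHeartbeats 400000
open CategoryTheory CategoryTheory.Limits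

noncomputable section
namespace Paper

variable (K : Type) [Field K]

abbrev Mq (t : ℕ) (i : Fin t) : Type :=
  Polynomial K ⧸ Ideal.span ({Polynomial.X ^ ((i : ℕ) + 1)} : Set (Polynomial K))

abbrev Nmod (t : ℕ) : Type := ∀ i : Fin t, Mq K t i

/-- The Auslander algebra of `K[x]/(x^t)`, i.e. the endomorphism algebra of
`⊕_{i=1}^{t} K[x]/(x^i)`. -/
def Aus (t : ℕ) : Type := Module.End (Polynomial K) (Nmod K t)

instance (t : ℕ) : Ring (Aus K t) :=
  inferInstanceAs (Ring (Module.End (Polynomial K) (Nmod K t)))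

instance (t : ℕ) : Algebra (Polynomial K) (Aus K t) :=
  inferInstanceAs (Algebra (Polynomial K) (Module.End (Polynomial K) (Nmod K t)))

instance (t : ℕ) : Algebra K (Aus K t) :=
  Algebra.compHom (Aus K t) (algebraMap K (Polynomial K))

abbrev Mod' (_K : Type) (B : Type) [Ring B] : Type 1 := ModuleCat.{0} Bᵐᵒᵖ

variable (t : ℕ)

/-- The idempotent `e_i ∈ A_t`: projection onto the `i`-th summand `M(i)`. -/
def idem (i : Fin t) : Aus K t :=
  (LinearMap.single (Polynomial K) (Mq K t) i).comp (LinearMap.proj i)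

/-- Left multiplication by `a` as an endomorphism of `A_t` as a right module over itself. -/
def lmul (a : Aus K t) : Aus K t →ₗ[(Aus K t)ᵐᵒᵖ] Aus K t where
  toFun x := a * x
  map_add' := mul_add a
  map_smul' c x := by
    simp [MulOpposite.smul_eq_mul_unop, mul_assoc]

/-- `A_t` as a right module over itself. -/
def AusObj : Mod' K (Aus K t) := ModuleCat.of (Aus K t)ᵐᵒᵖ (Aus K t)

/-- The indecomposable projective right module `P(i) = e_i A_t`. -/
def Psub (i : Fin t) : Submodule (Aus K t)ᵐᵒᵖ (Aus K t) := LinearMap.range (lmul K t (idem K t i))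

def Pobj (i : Fin t) : Mod' K (Aus K t) := ModuleCat.of (Aus K t)ᵐᵒᵖ (Psub K t i)

/-- multiplication by `x`, the canonical irreducible monomorphism `M(j) → M(i)`, `i = j+1`. -/
def xmulStep (j i : Fin t) (h : (j : ℕ) + 1 = (i : ℕ)) :
    Mq K t j →ₗ[Polynomial K] Mq K t i :=
  Submodule.mapQ (Ideal.span ({Polynomial.X ^ ((j : ℕ) + 1)} : Set (Polynomial K)))
    (Ideal.span ({Polynomial.X ^ ((i : ℕ) + 1)} : Set (Polynomial K)))
    (LinearMap.mulLeft (Polynomial K) Polynomial.X)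
    (by
      refine Submodule.span_le.2 (Set.singleton_subset_iff.2 ?_)
      rw [SetLike.mem_coe, Submodule.mem_comap]
      have hx : (LinearMap.mulLeft (Polynomial K) Polynomial.X) ((Polynomial.X : Polynomial K) ^ ((j : ℕ) + 1))
          = Polynomial.X ^ ((i : ℕ) + 1) := by
        rw [LinearMap.mulLeft_apply, ← h, pow_succ]
        ring
      rw [hx]
      exact Ideal.subset_span (Set.mem_singleton _))

/-- the arrow `b : i → i-1` of the quiver of `A_t`, realised as the element of
`e_i A_t e_{i-1}` given by the canonical irreducible monomorphism `M(i-1) → M(i)`. -/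
def arrB (j i : Fin t) (h : (j : ℕ) + 1 = (i : ℕ)) : Aus K t :=
  (LinearMap.single (Polynomial K) (Mq K t) i).comp
    ((xmulStep K t j i h).comp (LinearMap.proj j))

theorem idem_mul_arrB (j i : Fin t) (h : (j : ℕ) + 1 = (i : ℕ)) :
    idem K t i * arrB K t j i h = arrB K t j i h := by
  apply LinearMap.ext
  intro v
  erw [Module.End.mul_apply]
  simp only [idem, arrB, LinearMap.comp_apply, LinearMap.proj_apply, LinearMap.coe_single,
    Pi.single_eq_same]

theorem arrB_mul_idem (j i : Fin t) (h : (j : ℕ) + 1 = (i : ℕ)) :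
    arrB K t j i h * idem K t j = arrB K t j i h := by
  apply LinearMap.ext
  intro v
  erw [Module.End.mul_apply]
  simp only [idem, arrB, LinearMap.comp_apply, LinearMap.proj_apply, LinearMap.coe_single,
    Pi.single_eq_same]


section Generic

variable (B : Type) [Ring B] [Algebra K B]

instance : Linear K (Mod' K B) := ModuleCat.linearOverField

/-- Finite dimensionality (equivalently, finiteness over the f.d. algebra `B`). -/
abbrev FD (M : Mod' K B) : Prop := Module.Finite Bᵐᵒᵖ M

/-- `mod B`: the collection of finite dimensional modules. -/
def fdSub : Set (Mod' K B) := {M | FD K B M}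

/-- Ext groups, as `K`-modules. -/
abbrev EXT (n : ℕ) (M N : Mod' K B) : ModuleCat K :=
  ((Ext K (Mod' K B) n).obj (Opposite.op M)).obj N

/-- dimension of a Hom-space over `K`. -/
abbrev homDim (M N : Mod' K B) : ℕ := Module.finrank K (M ⟶ N)

/-- a short exact sequence `0 → X → Y → Z → 0`. -/
def IsSES {X Y Z : Mod' K B} (f : X ⟶ Y) (g : Y ⟶ Z) : Prop :=
  Mono f ∧ Epi g ∧ ∃ w : f ≫ g = 0, (ShortComplex.mk f g w).Exact

/-- projective dimension at most one. -/
def PdimLE1 (M : Mod' K B) : Prop :=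
  ∃ (P₀ P₁ : Mod' K B) (_ : Projective P₀) (_ : Projective P₁)
    (f : P₁ ⟶ P₀) (g : P₀ ⟶ M), IsSES K B f g

/-- direct summand. -/
def Summand (X M : Mod' K B) : Prop := ∃ (s : X ⟶ M) (r : M ⟶ X), s ≫ r = 𝟙 X

/-- indecomposable object. -/
def Indec (M : Mod' K B) : Prop :=
  ¬ IsZero M ∧ ∀ X Y : Mod' K B, Nonempty (M ≅ X ⊞ Y) → IsZero X ∨ IsZero Y

/-- `M ∈ Gen X`: `M` is a quotient of a finite direct sum of copies of `X`. -/
def InGen (X M : Mod' K B) : Prop :=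
  ∃ (n : ℕ) (g : ModuleCat.of Bᵐᵒᵖ (Fin n → X) ⟶ M), Epi g

/-- `N` is the torsion-free quotient `f_X(M)` w.r.t. the torsion pair `(Gen X, X^⊥)`. -/
def IsTFQuot (X M N : Mod' K B) : Prop :=
  ∃ (TM : Mod' K B) (f : TM ⟶ M) (g : M ⟶ N),
    IsSES K B f g ∧ InGen K B X TM ∧ ∀ h : X ⟶ N, h = 0

/-- An almost split (Auslander–Reiten) sequence `0 → N → E → M → 0` within a subcategory `S`. -/
def IsARSeq (S : Set (Mod' K B)) {N E M : Mod' K B} (f : N ⟶ E) (g : E ⟶ M) : Prop :=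
  N ∈ S ∧ E ∈ S ∧ M ∈ S ∧ IsSES K B f g ∧ Indec K B N ∧ Indec K B M ∧
    (¬ ∃ s : M ⟶ E, s ≫ g = 𝟙 M) ∧
    (∀ Z ∈ S, ∀ h : Z ⟶ M, (¬ ∃ s : M ⟶ Z, s ≫ h = 𝟙 M) → ∃ k : Z ⟶ E, k ≫ g = h)

/-- `N` is the Auslander–Reiten translate `τ M` inside the subcategory `S`
(in particular `M` is indecomposable and not projective in `S`). -/
def IsTauTr (S : Set (Mod' K B)) (N M : Mod' K B) : Prop :=
  ∃ (E : Mod' K B) (f : N ⟶ E) (g : E ⟶ M), IsARSeq K B S f g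

/-- `Hom(M, τ M) = 0` within `S`; `τ` of a projective summand is zero, so only
non-projective indecomposable summands (those admitting an AR sequence) contribute. -/
def TauRigid (S : Set (Mod' K B)) (M : Mod' K B) : Prop :=
  M ∈ S ∧ ∀ M₁ M₂ N : Mod' K B, Summand K B M₁ M → Summand K B M₂ M →
    IsTauTr K B S N M₂ → ∀ f : M₁ ⟶ N, f = 0

/-- the τ-perpendicular category `J(X) = X^⊥ ∩ ^⊥(τ X)` relative to `S`. -/
def Jcat (S : Set (Mod' K B)) (X : Mod' K B) : Set (Mod' K B) :=
  {M | M ∈ S ∧ (∀ f : X ⟶ M, f = 0) ∧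
    ∀ X₂ N : Mod' K B, Summand K B X₂ X → IsTauTr K B S N X₂ → ∀ g : M ⟶ N, g = 0}

/-- iterated τ-perpendicular category `J(M_i, …, M_1)` (list given as `[M_1, M_2, …]`). -/
def Jlist (S : Set (Mod' K B)) : List (Mod' K B) → Set (Mod' K B)
  | [] => S
  | M :: L => Jlist (Jcat K B S M) L

/-- `(…, M_2, M_1)`, listed as `[M_1, M_2, …]`, is a τ-exceptional sequence in `S`. -/
def IsTauExcList (S : Set (Mod' K B)) : List (Mod' K B) → Prop
  | [] => True
  | M :: L => M ∈ S ∧ FD K B M ∧ Indec K B M ∧ TauRigid K B S M ∧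
      IsTauExcList (Jcat K B S M) L

/-- `E 0 = M_1, …, E (n-1) = M_n` is a τ-exceptional sequence in `mod B`. -/
def IsTauExcSeq {n : ℕ} (E : Fin n → Mod' K B) : Prop :=
  IsTauExcList K B (fdSub K B) (List.ofFn E)

/-- exceptional module: f.d., no self-extensions, endomorphism algebra `K`. -/
def IsExc (M : Mod' K B) : Prop :=
  FD K B M ∧ (∀ n : ℕ, 1 ≤ n → Subsingleton (EXT K B n M M)) ∧
    Module.finrank K (M ⟶ M) = 1

/-- `E 0 = E_1, …, E (n-1) = E_n` is an exceptional sequence. -/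
def IsExcSeq {n : ℕ} (E : Fin n → Mod' K B) : Prop :=
  (∀ i, IsExc K B (E i)) ∧
    ∀ i j : Fin n, i < j →
      (∀ f : E i ⟶ E j, f = 0) ∧ ∀ ℓ : ℕ, 1 ≤ ℓ → Subsingleton (EXT K B ℓ (E i) (E j))

/-- the biproduct of the first `i` members of an ordered family. -/
def prevSum {r : ℕ} (D : Fin r → Mod' K B) (i : Fin r) : Mod' K B :=
  ⨁ (fun j : Fin (i : ℕ) => D (Fin.castLE i.isLt.le j))

/-- TF-ordered family. -/
def TFOrdered {r : ℕ} (D : Fin r → Mod' K B) : Prop :=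
  ∀ i : Fin r, 1 ≤ (i : ℕ) → ¬ InGen K B (prevSum K B D i) (D i)

/-- partial tilting module. -/
def IsPartialTilting (M : Mod' K B) : Prop :=
  FD K B M ∧ PdimLE1 K B M ∧ ∀ n : ℕ, 1 ≤ n → Subsingleton (EXT K B n M M)

/-- a basic tilting module with `r` indecomposable summands, given with its decomposition. -/
def IsBasicTiltingFam {r : ℕ} (D : Fin r → Mod' K B) : Prop :=
  IsPartialTilting K B (⨁ D) ∧ (∀ i, Indec K B (D i)) ∧
    ∀ i j : Fin r, i ≠ j → ¬ Nonempty (D i ≅ D j)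

/-- a basic tilting module (with `r` pairwise non-isomorphic indecomposable summands). -/
def IsBasicTilting (r : ℕ) (T : Mod' K B) : Prop :=
  ∃ D : Fin r → Mod' K B, Nonempty (T ≅ ⨁ D) ∧ IsBasicTiltingFam K B D

/-- `E` is the image `Φ(D)` of the ordered decomposition `D` under the
Mendoza–Treffinger map, i.e. `E_1 = D_1` and `E_i = f_{D_{i-1} ⊕ ⋯ ⊕ D_1}(D_i)`. -/
def IsPhiImage {r : ℕ} (D E : Fin r → Mod' K B) : Prop :=
  (∀ i : Fin r, 1 ≤ (i : ℕ) → IsTFQuot K B (prevSum K B D i) (D i) (E i)) ∧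
    ∀ h : 0 < r, Nonempty (E ⟨0, h⟩ ≅ D ⟨0, h⟩)

/-- a (minimal) right `add X`-approximation: every map from `X` factors through `f`,
and `f` is right minimal. -/
def IsMinRightApprox (X : Mod' K B) {X' M : Mod' K B} (f : X' ⟶ M) : Prop :=
  (∀ g : X ⟶ M, ∃ k : X ⟶ X', k ≫ f = g) ∧
    ∀ φ : X' ⟶ X', φ ≫ f = f → IsIso φ

/-- Jacobson radical of a module. -/
def radSub (M : Mod' K B) : Submodule Bᵐᵒᵖ M :=
  (⊥ : Ideal Bᵐᵒᵖ).jacobson • (⊤ : Submodule Bᵐᵒᵖ M)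

/-- the top `M/rad M` of a module. -/
def topObj (M : Mod' K B) : Mod' K B :=
  ModuleCat.of Bᵐᵒᵖ (M ⧸ radSub K B M)

/-- projective object relative to a subcategory `S`. -/
def ProjIn (S : Set (Mod' K B)) (P : Mod' K B) : Prop :=
  P ∈ S ∧ ∀ X ∈ S, ∀ Y ∈ S, ∀ g : X ⟶ Y, Epi g → ∀ h : P ⟶ Y, ∃ k : P ⟶ X, k ≫ g = h

/-- `Ext^1` vanishing relative to an (extension-closed, wide) subcategory `S`:
every short exact sequence `0 → N → Y → M → 0` with `Y ∈ S` splits. -/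
def Ext1VanIn (S : Set (Mod' K B)) (M N : Mod' K B) : Prop :=
  ∀ (Y : Mod' K B), Y ∈ S → ∀ (f : N ⟶ Y) (g : Y ⟶ M), IsSES K B f g →
    ∃ s : M ⟶ Y, s ≫ g = 𝟙 M

/-- projective dimension at most one relative to a subcategory `S`. -/
def PdimLE1In (S : Set (Mod' K B)) (M : Mod' K B) : Prop :=
  ∃ (P₀ P₁ : Mod' K B) (_ : ProjIn K B S P₀) (_ : ProjIn K B S P₁)
    (f : P₁ ⟶ P₀) (g : P₀ ⟶ M), IsSES K B f g

/-- a basic tilting object of a subcategory `S`, with `r` summands. -/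
def IsBasicTiltingIn (S : Set (Mod' K B)) (r : ℕ) (T : Mod' K B) : Prop :=
  T ∈ S ∧ PdimLE1In K B S T ∧ Ext1VanIn K B S T T ∧
    ∃ D : Fin r → Mod' K B, Nonempty (T ≅ ⨁ D) ∧ (∀ i, D i ∈ S ∧ Indec K B (D i)) ∧
      ∀ i j : Fin r, i ≠ j → ¬ Nonempty (D i ≅ D j)


end Generic

section TiltDecomp

variable (t : ℕ)

/-- `T_i = e_i T`, for a right ideal `T` which is also left stable. -/
def Tpart (T : Submodule (Aus K t)ᵐᵒᵖ (Aus K t)) (i : Fin t) :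
    Submodule (Aus K t)ᵐᵒᵖ (Aus K t) := T.map (lmul K t (idem K t i))

def Tobj (T : Submodule (Aus K t)ᵐᵒᵖ (Aus K t)) (i : Fin t) : Mod' K (Aus K t) :=
  ModuleCat.of (Aus K t)ᵐᵒᵖ (Tpart K t T i)

/-- `T` is stable under left multiplication (e.g. a two-sided ideal). -/
def LeftStable (T : Submodule (Aus K t)ᵐᵒᵖ (Aus K t)) : Prop :=
  ∀ a : Aus K t, ∀ x ∈ T, a * x ∈ T

/-- `h_{i-1} : T_{i-1} → T_i`, given by left multiplication by the arrow `b_i : i → i-1`. -/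
def hmor {T : Submodule (Aus K t)ᵐᵒᵖ (Aus K t)} (hT : LeftStable K t T)
    (j i : Fin t) (h : (j : ℕ) + 1 = (i : ℕ)) : Tobj K t T j ⟶ Tobj K t T i :=
  ModuleCat.ofHom
    ((lmul K t (arrB K t j i h)).restrict
      (p := Tpart K t T j) (q := Tpart K t T i)
      (by
        intro x hx
        rcases Submodule.mem_map.1 hx with ⟨y, hy, rfl⟩
        refine Submodule.mem_map.2
          ⟨arrB K t j i h * (idem K t j * y), hT _ _ (hT _ _ hy), ?_⟩
        show idem K t i * (arrB K t j i h * (idem K t j * y))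
            = arrB K t j i h * ((lmul K t (idem K t j)) y)
        rw [← mul_assoc, idem_mul_arrB]
        rfl))

/-- the `i`-th entry of the dimension vector of a right module `M`, i.e. `dim_K (M e_i)`. -/
def vdim (i : Fin t) (M : Mod' K (Aus K t)) : ℕ := by
  classical
  letI : Module K M := ModuleCat.moduleOfAlgebraModule M
  haveI : IsScalarTower K (Aus K t)ᵐᵒᵖ M := ModuleCat.isScalarTower_of_algebra_moduleCat M
  exact Module.finrank K (LinearMap.range
    ({ toFun := fun m => (MulOpposite.op (idem K t i)) • m
       map_add' := fun a b => smul_add _ a b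
       map_smul' := fun k m => by
         simp only [RingHom.id_apply]
         rw [algebra_compatible_smul ((Aus K t)ᵐᵒᵖ) k m, smul_smul,
           ← Algebra.commutes k (MulOpposite.op (idem K t i)), ← smul_smul,
           ← algebra_compatible_smul] } : M →ₗ[K] M))

/-- thin module: all entries of the dimension vector are `0` or `1`. -/
def IsThin (M : Mod' K (Aus K t)) : Prop := ∀ i : Fin t, vdim K t i M ≤ 1

end TiltDecomp

end Paper

namespace Paper
section Stmt5Aux

open Polynomial

variable (K : Type) [Field K] (t : ℕ)

/-- factor out the largest power of `X` from a nonzero polynomial. -/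
lemma exists_X_pow_mul :
    ∀ (n : ℕ) (P : Polynomial K), P.natDegree = n → P ≠ 0 →
      ∃ (c : ℕ) (U : Polynomial K), P = X ^ c * U ∧ U.coeff 0 ≠ 0 := by
  intro n
  induction n using Nat.strong_induction_on with
  | _ n ih =>
    intro P hn hP
    by_cases h0 : P.coeff 0 = 0
    · obtain ⟨Q, rfl⟩ := Polynomial.X_dvd_iff.mpr h0
      have hQ : Q ≠ 0 := fun hq => hP (by rw [hq, mul_zero])
      have hlt : Q.natDegree < n := by
        rw [← hn, Polynomial.natDegree_mul Polynomial.X_ne_zero hQ, Polynomial.natDegree_X]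
        omega
      obtain ⟨c, U, hU, hU0⟩ := ih Q.natDegree hlt Q rfl hQ
      exact ⟨c + 1, U, by rw [hU, pow_succ]; ring, hU0⟩
    · exact ⟨0, P, by rw [pow_zero, one_mul], h0⟩

lemma idem_mul_idem (l : Fin t) : idem K t l * idem K t l = idem K t l := by
  apply LinearMap.ext; intro v
  erw [Module.End.mul_apply]
  simp only [idem, LinearMap.comp_apply, LinearMap.proj_apply, LinearMap.coe_single,
    Pi.single_eq_same]

lemma sum_idem : (∑ k : Fin t, idem K t k) = (1 : Aus K t) := by
  apply LinearMap.ext; intro v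
  erw [LinearMap.sum_apply, Module.End.one_apply]
  simp only [idem, LinearMap.comp_apply, LinearMap.proj_apply, LinearMap.coe_single]
  exact Finset.univ_sum_single v

/-- the element of `Aus K t` with single entry `g` in position `(l,k)`. -/
def sMap (l k : Fin t) (g : Mq K t k →ₗ[Polynomial K] Mq K t l) : Aus K t :=
  (LinearMap.single (Polynomial K) (Mq K t) l).comp (g.comp (LinearMap.proj k))

lemma sMap_apply (l k : Fin t) (g : Mq K t k →ₗ[Polynomial K] Mq K t l) (v : Nmod K t) :
    (show Nmod K t →ₗ[Polynomial K] Nmod K t from sMap K t l k g) v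
      = Pi.single l (g (v k)) := rfl

lemma arrB_eq_sMap (j i : Fin t) (h : (j : ℕ) + 1 = (i : ℕ)) :
    arrB K t j i h = sMap K t i j (xmulStep K t j i h) := rfl

lemma idem_mul_sMap (l k : Fin t) (g : Mq K t k →ₗ[Polynomial K] Mq K t l) :
    idem K t l * sMap K t l k g = sMap K t l k g := by
  apply LinearMap.ext; intro v
  erw [Module.End.mul_apply]
  simp only [idem, sMap, LinearMap.comp_apply, LinearMap.proj_apply, LinearMap.coe_single,
    Pi.single_eq_same]

lemma sMap_mul_sMap (l k m : Fin t) (g : Mq K t k →ₗ[Polynomial K] Mq K t l)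
    (g' : Mq K t m →ₗ[Polynomial K] Mq K t k) :
    sMap K t l k g * sMap K t k m g' = sMap K t l m (g.comp g') := by
  apply LinearMap.ext; intro v
  erw [Module.End.mul_apply]
  simp only [sMap, LinearMap.comp_apply, LinearMap.proj_apply, LinearMap.coe_single,
    Pi.single_eq_same]

/-- the `(l,k)` entry of an element of `Aus K t`. -/
def entryMap (F : Aus K t) (l k : Fin t) : Mq K t k →ₗ[Polynomial K] Mq K t l :=
  (LinearMap.proj l).comp ((show Nmod K t →ₗ[Polynomial K] Nmod K t from F).comp
    (LinearMap.single (Polynomial K) (Mq K t) k))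

lemma entryMap_rep (F : Aus K t) (l k : Fin t) :
    ∃ P : Polynomial K, ∀ Q : Polynomial K,
      entryMap K t F l k (Submodule.Quotient.mk Q) = (Submodule.Quotient.mk (P * Q) : Mq K t l) := by
  obtain ⟨P, hP⟩ := Submodule.Quotient.mk_surjective _
    (entryMap K t F l k (Submodule.Quotient.mk 1))
  refine ⟨P, fun Q => ?_⟩
  have h1 : (Submodule.Quotient.mk Q : Mq K t k) = Q • (Submodule.Quotient.mk 1 : Mq K t k) := by
    rw [← Submodule.Quotient.mk_smul, smul_eq_mul, mul_one]
  rw [h1, map_smul, ← hP, ← Submodule.Quotient.mk_smul, smul_eq_mul, mul_comm]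

lemma eq_sMap (F : Aus K t) (l k : Fin t)
    (hl : idem K t l * F = F) (hk : F * idem K t k = F) :
    F = sMap K t l k (entryMap K t F l k) := by
  have h2 : idem K t l * (F * idem K t k) = sMap K t l k (entryMap K t F l k) := by
    apply LinearMap.ext; intro v
    erw [Module.End.mul_apply, Module.End.mul_apply]
  rw [← h2, hk, hl]

/-- multiplication by `C` as a map `Mq k → Mq l`. -/
def mulQmap (k l : Fin t) (C : Polynomial K)
    (hC : X ^ ((k : ℕ) + 1) * C ∈ Ideal.span ({X ^ ((l : ℕ) + 1)} : Set (Polynomial K))) :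
    Mq K t k →ₗ[Polynomial K] Mq K t l :=
  Submodule.mapQ _ _ (LinearMap.mulLeft (Polynomial K) C) (by
    refine Submodule.span_le.2 (Set.singleton_subset_iff.2 ?_)
    rw [SetLike.mem_coe, Submodule.mem_comap, LinearMap.mulLeft_apply]
    rwa [mul_comm])

lemma mulQmap_mk (k l : Fin t) (C : Polynomial K) (hC) (Q : Polynomial K) :
    mulQmap K t k l C hC (Submodule.Quotient.mk Q) = (Submodule.Quotient.mk (C * Q) : Mq K t l) := by
  simp only [mulQmap, Submodule.mapQ_apply, LinearMap.mulLeft_apply]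

lemma xmulStep_mk (j i : Fin t) (h : (j : ℕ) + 1 = (i : ℕ)) (Q : Polynomial K) :
    xmulStep K t j i h (Submodule.Quotient.mk Q) = (Submodule.Quotient.mk (X * Q) : Mq K t i) := by
  simp only [xmulStep, Submodule.mapQ_apply, LinearMap.mulLeft_apply]

lemma xmulStep_injective (j i : Fin t) (h : (j : ℕ) + 1 = (i : ℕ)) :
    Function.Injective (xmulStep K t j i h) := by
  intro m₁ m₂ hm
  obtain ⟨Q₁, rfl⟩ := Submodule.Quotient.mk_surjective _ m₁
  obtain ⟨Q₂, rfl⟩ := Submodule.Quotient.mk_surjective _ m₂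
  rw [xmulStep_mk, xmulStep_mk, Submodule.Quotient.eq] at hm
  rw [Submodule.Quotient.eq]
  obtain ⟨S, hS⟩ := Ideal.mem_span_singleton.mp hm
  refine Ideal.mem_span_singleton.mpr ⟨S, ?_⟩
  have h2 : (X : Polynomial K) * (Q₁ - Q₂) = X * (X ^ ((j : ℕ) + 1) * S) := by
    rw [mul_sub, hS]
    have h3 : (i : ℕ) + 1 = 1 + ((j : ℕ) + 1) := by omega
    rw [h3, pow_add, pow_one]; ring
  exact mul_left_cancel₀ Polynomial.X_ne_zero h2

variable (T : Submodule (Aus K t)ᵐᵒᵖ (Aus K t))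

lemma idem_mul_coe {l : Fin t} (f : Tpart K t T l) :
    idem K t l * (f : Aus K t) = (f : Aus K t) := by
  obtain ⟨x, hxT, hx⟩ := Submodule.mem_map.mp f.2
  rw [← hx]
  show idem K t l * (idem K t l * x) = idem K t l * x
  rw [← mul_assoc, idem_mul_idem]

lemma coe_Tpart_mem (hL : LeftStable K t T) {l : Fin t} (f : Tpart K t T l) :
    (f : Aus K t) ∈ T := by
  obtain ⟨x, hxT, hx⟩ := Submodule.mem_map.mp f.2
  rw [← hx]
  exact hL _ _ hxT

lemma idem_eq_sMap (l : Fin t) : idem K t l = sMap K t l l LinearMap.id := rfl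

lemma aus_algebraMap_apply (Q : Polynomial K) (v : Nmod K t) :
    (show Nmod K t →ₗ[Polynomial K] Nmod K t from
      algebraMap (Polynomial K) (Aus K t) Q) v = Q • v := rfl

lemma hmor_ker (hL : LeftStable K t T) (j i : Fin t) (h : (j : ℕ) + 1 = (i : ℕ))
    (z : Tpart K t T j) (hz0 : arrB K t j i h * (z : Aus K t) = 0) : z = 0 := by
  apply Subtype.ext
  rw [ZeroMemClass.coe_zero]
  apply LinearMap.ext; intro v
  erw [LinearMap.zero_apply]
  have h1 := LinearMap.ext_iff.mp hz0 v
  erw [Module.End.mul_apply, LinearMap.zero_apply, arrB_eq_sMap, sMap_apply] at h1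
  have h2 := congrFun h1 i
  rw [Pi.single_eq_same, Pi.zero_apply] at h2
  have h3 := xmulStep_injective K t j i h (h2.trans (map_zero (xmulStep K t j i h)).symm)
  have e₁ := LinearMap.ext_iff.mp (idem_mul_coe K t T z) v
  erw [Module.End.mul_apply] at e₁
  rw [← e₁, idem_eq_sMap, sMap_apply, h3, map_zero, Pi.single_zero]

lemma hmor_injective (hL : LeftStable K t T) (j i : Fin t) (h : (j : ℕ) + 1 = (i : ℕ)) :
    Function.Injective (hmor K t hL j i h) := by
  have key : ∀ w : Tpart K t T j, hmor K t hL j i h w = 0 → w = 0 := by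
    intro w hw
    exact hmor_ker K t T hL j i h w (congrArg Subtype.val hw)
  intro z₁ z₂ hz
  have h0 : hmor K t hL j i h (z₁ - z₂) = 0 := by rw [map_sub, hz, sub_self]
  exact sub_eq_zero.mp (key (z₁ - z₂) h0)

end Stmt5Aux
end Paper

namespace Paper
section Stmt5Core

open Polynomial

variable (K : Type) [Field K] (t : ℕ)
variable (T : Submodule (Aus K t)ᵐᵒᵖ (Aus K t))

lemma core_col (hL : LeftStable K t T) (j i : Fin t) (h : (j : ℕ) + 1 = (i : ℕ))
    (j' : Fin t) (hj' : (j' : ℕ) < (i : ℕ))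
    (u : Tpart K t T j' →ₗ[(Aus K t)ᵐᵒᵖ] Tpart K t T i) (f : Tpart K t T j') (k : Fin t)
    (hfk : (f : Aus K t) * idem K t k = (f : Aus K t)) :
    ((u f : Tpart K t T i) : Aus K t) ∈ (Tpart K t T j).map (lmul K t (arrB K t j i h)) := by
  classical
  obtain ⟨P, hPrep⟩ := entryMap_rep K t (f : Aus K t) j' k
  have hf_left : idem K t j' * (f : Aus K t) = (f : Aus K t) := idem_mul_coe K t T f
  by_cases hP0 : (Submodule.Quotient.mk P : Mq K t j') = 0
  · -- the column is zero
    have hent : entryMap K t (f : Aus K t) j' k = 0 := by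
      apply LinearMap.ext; intro m
      obtain ⟨Q, rfl⟩ := Submodule.Quotient.mk_surjective _ m
      rw [hPrep, LinearMap.zero_apply]
      rw [Submodule.Quotient.mk_eq_zero] at hP0 ⊢
      exact Ideal.mul_mem_right Q _ hP0
    have hf0 : (f : Aus K t) = 0 := by
      rw [eq_sMap K t (f : Aus K t) j' k hf_left hfk, hent]
      apply LinearMap.ext; intro v
      rw [sMap_apply, LinearMap.zero_apply]; erw [LinearMap.zero_apply]; rw [Pi.single_zero]
    have hfz : f = 0 := Subtype.ext hf0
    rw [hfz, map_zero]
    rw [ZeroMemClass.coe_zero]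
    exact Submodule.zero_mem _
  · -- main case
    have hPne : P ≠ 0 := by
      intro h0
      apply hP0
      rw [h0, ← Submodule.Quotient.mk_zero]  -- mk 0 = 0
    obtain ⟨c, U, hPU, hU0⟩ := exists_X_pow_mul K P.natDegree P rfl hPne
    have hc : c ≤ (j' : ℕ) := by
      by_contra hcc
      apply hP0
      rw [Submodule.Quotient.mk_eq_zero]
      refine Ideal.mem_span_singleton.mpr ?_
      rw [hPU]
      exact Dvd.dvd.mul_right (pow_dvd_pow X (by omega)) U
    set d := (j' : ℕ) + 1 - c with hd
    -- the annihilator relation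
    have hfa : (f : Aus K t) * algebraMap (Polynomial K) (Aus K t) (X ^ d) = 0 := by
      apply LinearMap.ext; intro v
      erw [Module.End.mul_apply, LinearMap.zero_apply, aus_algebraMap_apply]
      conv_lhs => rw [eq_sMap K t (f : Aus K t) j' k hf_left hfk]
      rw [sMap_apply]
      have hvk : (((X : Polynomial K) ^ d • v : Nmod K t)) k = ((X : Polynomial K) ^ d) • (v k) := rfl
      rw [hvk]
      obtain ⟨Q, hQ⟩ := Submodule.Quotient.mk_surjective _ (v k)
      rw [← hQ, ← Submodule.Quotient.mk_smul, smul_eq_mul, hPrep]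
      have hzero : (Submodule.Quotient.mk (P * (X ^ d * Q)) : Mq K t j') = 0 := by
        rw [Submodule.Quotient.mk_eq_zero]
        refine Ideal.mem_span_singleton.mpr ⟨U * Q, ?_⟩
        rw [hPU]
        have hcd : (j' : ℕ) + 1 = c + d := by omega
        rw [hcd, pow_add]; ring
      rw [hzero, Pi.single_zero]
    have hfa0 : (MulOpposite.op (algebraMap (Polynomial K) (Aus K t) (X ^ d))) • f
        = (0 : Tpart K t T j') := by
      apply Subtype.ext
      rw [SetLike.val_smul, MulOpposite.smul_eq_mul_unop, MulOpposite.unop_op, hfa,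
        ZeroMemClass.coe_zero]
    have hufa : ((u f : Tpart K t T i) : Aus K t) * algebraMap (Polynomial K) (Aus K t) (X ^ d)
        = 0 := by
      have h2 : (MulOpposite.op (algebraMap (Polynomial K) (Aus K t) (X ^ d))) • (u f)
          = (0 : Tpart K t T i) := by
        rw [← map_smul, hfa0, map_zero]
      calc ((u f : Tpart K t T i) : Aus K t) * algebraMap (Polynomial K) (Aus K t) (X ^ d)
          = (((MulOpposite.op (algebraMap (Polynomial K) (Aus K t) (X ^ d))) • (u f) :
              Tpart K t T i) : Aus K t) := by
            rw [SetLike.val_smul, MulOpposite.smul_eq_mul_unop, MulOpposite.unop_op]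
        _ = 0 := by rw [h2, ZeroMemClass.coe_zero]
    -- column property of w := u f
    have hfk_smul : (MulOpposite.op (idem K t k)) • f = f := by
      apply Subtype.ext
      rw [SetLike.val_smul, MulOpposite.smul_eq_mul_unop, MulOpposite.unop_op, hfk]
    have hw_k : ((u f : Tpart K t T i) : Aus K t) * idem K t k
        = ((u f : Tpart K t T i) : Aus K t) := by
      have h2 : (MulOpposite.op (idem K t k)) • (u f) = u f := by
        rw [← map_smul, hfk_smul]
      calc ((u f : Tpart K t T i) : Aus K t) * idem K t k
          = (((MulOpposite.op (idem K t k)) • (u f) : Tpart K t T i) : Aus K t) := by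
            rw [SetLike.val_smul, MulOpposite.smul_eq_mul_unop, MulOpposite.unop_op]
        _ = ((u f : Tpart K t T i) : Aus K t) := by rw [h2]
    have hw_left : idem K t i * ((u f : Tpart K t T i) : Aus K t)
        = ((u f : Tpart K t T i) : Aus K t) := idem_mul_coe K t T (u f)
    obtain ⟨W, hWrep⟩ := entryMap_rep K t ((u f : Tpart K t T i) : Aus K t) i k
    -- the divisibility constraint on W
    have hWdvd : (X : Polynomial K) ^ ((i : ℕ) + 1) ∣ W * X ^ d := by
      have hv₀ : ∃ v₀ : Nmod K t, v₀ k = (Submodule.Quotient.mk 1 : Mq K t k) :=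
        ⟨Pi.single k (Submodule.Quotient.mk 1), Pi.single_eq_same _ _⟩
      obtain ⟨v₀, hv₀k⟩ := hv₀
      have h0 := LinearMap.ext_iff.mp hufa v₀
      erw [Module.End.mul_apply, LinearMap.zero_apply, aus_algebraMap_apply] at h0
      conv_lhs at h0 =>
        rw [eq_sMap K t ((u f : Tpart K t T i) : Aus K t) i k hw_left hw_k, sMap_apply]
      have hvk : (((X : Polynomial K) ^ d • v₀ : Nmod K t)) k = ((X : Polynomial K) ^ d) • (v₀ k) := rfl
      rw [hvk, hv₀k, ← Submodule.Quotient.mk_smul, smul_eq_mul, mul_one, hWrep] at h0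
      have h1 := congrFun h0 i
      rw [Pi.single_eq_same, Pi.zero_apply] at h1
      exact Ideal.mem_span_singleton.mp ((Submodule.Quotient.mk_eq_zero _).mp h1)
    obtain ⟨S₀, hS₀⟩ := hWdvd
    have hW : W = X ^ ((i : ℕ) + 1 - d) * S₀ := by
      have hXd : (X : Polynomial K) ^ d ≠ 0 := pow_ne_zero _ Polynomial.X_ne_zero
      apply mul_right_cancel₀ hXd
      rw [hS₀]
      have h3 : (i : ℕ) + 1 = ((i : ℕ) + 1 - d) + d := by omega
      conv_lhs => rw [h3, pow_add]
      ring
    -- invert the unit U modulo X^(i+1)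
    have hcop : IsCoprime ((X : Polynomial K) ^ ((i : ℕ) + 1)) U :=
      ((Polynomial.irreducible_X.coprime_iff_not_dvd).mpr
        (by rw [Polynomial.X_dvd_iff]; exact hU0)).pow_left
    obtain ⟨A₀, V, hAV⟩ := hcop
    -- the dividing element
    have he₁ : ((j' : ℕ) + 1) + ((i : ℕ) - 1 - (j' : ℕ)) = (j : ℕ) + 1 := by omega
    have hCmem : X ^ ((j' : ℕ) + 1) * (X ^ ((i : ℕ) - 1 - (j' : ℕ)) * (S₀ * V))
        ∈ Ideal.span ({X ^ ((j : ℕ) + 1)} : Set (Polynomial K)) := by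
      refine Ideal.mem_span_singleton.mpr ⟨S₀ * V, ?_⟩
      rw [← mul_assoc, ← pow_add, he₁]
    set cmap := mulQmap K t j' j (X ^ ((i : ℕ) - 1 - (j' : ℕ)) * (S₀ * V)) hCmem with hcmap
    -- the key pointwise identity
    have hkey : xmulStep K t j i h ∘ₗ (cmap ∘ₗ entryMap K t (f : Aus K t) j' k)
        = entryMap K t ((u f : Tpart K t T i) : Aus K t) i k := by
      apply LinearMap.ext; intro m
      obtain ⟨Q, rfl⟩ := Submodule.Quotient.mk_surjective _ m
      rw [LinearMap.comp_apply, LinearMap.comp_apply, hPrep, hcmap, mulQmap_mk, xmulStep_mk,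
        hWrep]
      have hpoly : X * ((X ^ ((i : ℕ) - 1 - (j' : ℕ)) * (S₀ * V)) * (P * Q))
          = W * Q - ((W * A₀) * Q) * X ^ ((i : ℕ) + 1) := by
        rw [hPU, hW]
        have hE : (i : ℕ) + 1 - d = 1 + ((i : ℕ) - 1 - (j' : ℕ)) + c := by omega
        rw [hE]
        linear_combination (X ^ (1 + ((i : ℕ) - 1 - (j' : ℕ)) + c) * S₀ * Q) * hAV
      rw [hpoly, Submodule.Quotient.eq]
      have hsub : (W * Q - ((W * A₀) * Q) * X ^ ((i : ℕ) + 1)) - W * Q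
          = -(((W * A₀) * Q) * X ^ ((i : ℕ) + 1)) := by ring
      rw [hsub]
      exact Submodule.neg_mem _ (Ideal.mem_span_singleton.mpr (dvd_mul_left _ _))
    -- assemble
    have hzT : sMap K t j j' cmap * (f : Aus K t) ∈ T :=
      hL _ _ (coe_Tpart_mem K t T hL f)
    have hzTp : sMap K t j j' cmap * (f : Aus K t) ∈ Tpart K t T j := by
      refine Submodule.mem_map.mpr ⟨sMap K t j j' cmap * (f : Aus K t), hzT, ?_⟩
      show idem K t j * (sMap K t j j' cmap * (f : Aus K t))
          = sMap K t j j' cmap * (f : Aus K t)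
      rw [← mul_assoc, idem_mul_sMap]
    refine Submodule.mem_map.mpr ⟨sMap K t j j' cmap * (f : Aus K t), hzTp, ?_⟩
    show arrB K t j i h * (sMap K t j j' cmap * (f : Aus K t))
        = ((u f : Tpart K t T i) : Aus K t)
    conv_lhs => rw [eq_sMap K t (f : Aus K t) j' k hf_left hfk]
    rw [sMap_mul_sMap K t j j' k cmap (entryMap K t (f : Aus K t) j' k), arrB_eq_sMap,
      sMap_mul_sMap K t i j k (xmulStep K t j i h)
        (cmap ∘ₗ entryMap K t (f : Aus K t) j' k)]
    rw [hkey]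
    exact (eq_sMap K t ((u f : Tpart K t T i) : Aus K t) i k hw_left hw_k).symm

lemma core (hL : LeftStable K t T) (j i : Fin t) (h : (j : ℕ) + 1 = (i : ℕ))
    (j' : Fin t) (hj' : (j' : ℕ) < (i : ℕ))
    (u : Tpart K t T j' →ₗ[(Aus K t)ᵐᵒᵖ] Tpart K t T i) (y : Tpart K t T j') :
    ((u y : Tpart K t T i) : Aus K t) ∈ (Tpart K t T j).map (lmul K t (arrB K t j i h)) := by
  classical
  have hy : y = ∑ k : Fin t, (MulOpposite.op (idem K t k)) • y := by
    apply Subtype.ext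
    rw [AddSubmonoidClass.coe_finset_sum]
    have hterm : ∀ k : Fin t,
        (((MulOpposite.op (idem K t k)) • y : Tpart K t T j') : Aus K t)
          = (y : Aus K t) * idem K t k := by
      intro k
      rw [SetLike.val_smul, MulOpposite.smul_eq_mul_unop, MulOpposite.unop_op]
    rw [Finset.sum_congr rfl fun k _ => hterm k, ← Finset.mul_sum, sum_idem, mul_one]
  rw [hy, map_sum, AddSubmonoidClass.coe_finset_sum]
  refine Submodule.sum_mem _ fun k _ => ?_
  have hcoe : (((MulOpposite.op (idem K t k)) • y : Tpart K t T j') : Aus K t)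
      = (y : Aus K t) * idem K t k := by
    rw [SetLike.val_smul, MulOpposite.smul_eq_mul_unop, MulOpposite.unop_op]
  exact core_col K t T hL j i h j' hj' u _ k
    (by rw [hcoe, mul_assoc, idem_mul_idem])

lemma factor (hL : LeftStable K t T) (j i : Fin t) (h : (j : ℕ) + 1 = (i : ℕ))
    (j' : Fin t) (hj' : (j' : ℕ) < (i : ℕ))
    (u : Tobj K t T j' ⟶ Tobj K t T i) :
    ∃ kb : Tobj K t T j' ⟶ Tobj K t T j, kb ≫ hmor K t hL j i h = u := by
  classical
  let u' : Tpart K t T j' →ₗ[(Aus K t)ᵐᵒᵖ] Tpart K t T i := u.hom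
  let h' : Tpart K t T j →ₗ[(Aus K t)ᵐᵒᵖ] Tpart K t T i := (hmor K t hL j i h).hom
  have hinj' : Function.Injective h' := hmor_injective K t T hL j i h
  have hmem' : ∀ x : Tpart K t T j', u' x ∈ LinearMap.range h' := by
    intro x
    obtain ⟨z, hz, hzeq⟩ := core K t T hL j i h j' hj' u' x
    exact ⟨⟨z, hz⟩, Subtype.ext hzeq⟩
  refine ⟨ModuleCat.ofHom ((LinearEquiv.ofInjective h' hinj').symm.toLinearMap ∘ₗ
    LinearMap.codRestrict (LinearMap.range h') u' hmem'), ?_⟩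
  apply ModuleCat.hom_ext; apply LinearMap.ext; intro x
  show h' ((LinearEquiv.ofInjective h' hinj').symm
    (LinearMap.codRestrict (LinearMap.range h') u' hmem' x)) = u x
  rw [LinearEquiv.ofInjective_symm_apply]
  rfl

end Stmt5Core
end Paper

open CategoryTheory CategoryTheory.Limits Paper in
/-- For a basic tilting module `T` with quasi-hereditary decomposition `T_i = e_i T`, the map
`h_(i-1) : T_(i-1) → T_i` given by left multiplication by the arrow `b` is a minimal right
`add(⊕_(j<i) T_j)`-approximation of `T_i` and is a monomorphism. -/
theorem stmt5 (K : Type) [Field K] [IsAlgClosed K] (t : ℕ) (ht : 2 ≤ t)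
    (T : Submodule (Aus K t)ᵐᵒᵖ (Aus K t)) (hL : LeftStable K t T)
    (hTilt : IsBasicTiltingFam K (Aus K t) (fun i => Tobj K t T i)) :
    ∀ (j i : Fin t) (h : (j : ℕ) + 1 = (i : ℕ)),
      Mono (hmor K t hL j i h) ∧
      IsMinRightApprox K (Aus K t)
        (prevSum K (Aus K t) (fun k => Tobj K t T k) i) (hmor K t hL j i h) := by
  intro j i h
  haveI hmono : Mono (hmor K t hL j i h) :=
    (ModuleCat.mono_iff_injective _).mpr (hmor_injective K t T hL j i h)
  refine ⟨hmono, ?_, ?_⟩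
  · -- approximation property
    intro g0
    let F : Fin ((i : ℕ)) → Mod' K (Aus K t) :=
      fun b => Tobj K t T (Fin.castLE i.isLt.le b)
    obtain ⟨g, rfl⟩ : ∃ g : ⨁ F ⟶ Tobj K t T i, g = g0 := ⟨g0, rfl⟩
    have hg : ∀ b : Fin ((i : ℕ)), ∃ kb : F b ⟶ Tobj K t T j,
        kb ≫ hmor K t hL j i h = biproduct.ι F b ≫ g := fun b =>
      factor K t T hL j i h (Fin.castLE i.isLt.le b) (by simpa using b.isLt)
        (biproduct.ι F b ≫ g)
    choose kb hkb using hg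
    refine ⟨∑ b : Fin ((i : ℕ)), biproduct.π F b ≫ kb b, ?_⟩
    rw [Preadditive.sum_comp]
    calc ∑ b : Fin ((i : ℕ)), (biproduct.π F b ≫ kb b) ≫ hmor K t hL j i h
        = ∑ b : Fin ((i : ℕ)), biproduct.π F b ≫ (kb b ≫ hmor K t hL j i h) := by
          simp only [Category.assoc]
      _ = ∑ b : Fin ((i : ℕ)), biproduct.π F b ≫ (biproduct.ι F b ≫ g) := by
          refine Finset.sum_congr rfl fun b _ => ?_
          rw [hkb]
      _ = ∑ b : Fin ((i : ℕ)), (biproduct.π F b ≫ biproduct.ι F b) ≫ g := by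
          simp only [Category.assoc]
      _ = (∑ b : Fin ((i : ℕ)), biproduct.π F b ≫ biproduct.ι F b) ≫ g := by
          rw [Preadditive.sum_comp]
      _ = g := by rw [biproduct.total, Category.id_comp]
  · -- right minimality
    intro φ hφ
    have hφ1 : φ = 𝟙 (Tobj K t T j) := by
      have h2 : φ ≫ hmor K t hL j i h = 𝟙 (Tobj K t T j) ≫ hmor K t hL j i h := by
        rw [hφ, Category.id_comp]
      exact (cancel_mono (hmor K t hL j i h)).mp h2
    rw [hφ1]
    infer_instance
end
end

section
/- Let T be a basic tilting module over the Auslander algebra A_t with quasi-hereditary decomposition T = T_t ⊕ ⋯ ⊕ T_1 (T_i = e_i T). Then this decomposition is TF-ordered: T_i ∉ Gen(⊕_{j=1}^{i−1} T_j) for all 2 ≤ i ≤ t. -/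
set_option maxHeartbeats 1000000
set_option synthInstance.maxHeartbeats 400000
open CategoryTheory CategoryTheory.Limits

noncomputable section
noncomputable section TFAux
namespace Paper

open Polynomial

variable {K : Type} [Field K] {t : ℕ}

/-- view an element of the Auslander algebra as a linear endomorphism -/
abbrev ev (a : Aus K t) : Nmod K t →ₗ[Polynomial K] Nmod K t := a

theorem ev_mul (a b : Aus K t) (v : Nmod K t) : ev (a * b) v = ev a (ev b v) := rfl

theorem idem_idem (i : Fin t) : idem K t i * idem K t i = idem K t i := by
  apply LinearMap.ext
  intro v
  erw [Module.End.mul_apply]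
  simp only [idem, LinearMap.comp_apply, LinearMap.proj_apply, LinearMap.coe_single,
    Pi.single_eq_same]

theorem mem_Tpart {T : Submodule (Aus K t)ᵐᵒᵖ (Aus K t)} (hL : LeftStable K t T) {i : Fin t}
    {v : Aus K t} (hv : v ∈ Tpart K t T i) : v ∈ T ∧ idem K t i * v = v := by
  obtain ⟨w, hw, rfl⟩ := Submodule.mem_map.1 hv
  have h1 : (lmul K t (idem K t i)) w = idem K t i * w := rfl
  rw [h1]
  exact ⟨hL _ _ hw, by rw [← mul_assoc, idem_idem]⟩

theorem row_rep {i : Fin t} {f : Aus K t} (hf : idem K t i * f = f) (v : Nmod K t) :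
    ev f v = Pi.single i (ev f v i) := by
  conv_lhs => rw [← hf]
  rfl

/-- `X^t` kills every element of `N`. -/
theorem xpow_smul_eq_zero (n : Nmod K t) : (Polynomial.X : Polynomial K) ^ t • n = 0 := by
  funext m
  show (Polynomial.X : Polynomial K) ^ t • n m = 0
  obtain ⟨p, hp⟩ := Submodule.Quotient.mk_surjective _ (n m)
  rw [← hp, ← Submodule.Quotient.mk_smul, Submodule.Quotient.mk_eq_zero, smul_eq_mul,
    Ideal.mem_span_singleton]
  exact Dvd.dvd.mul_right (pow_dvd_pow _ (by omega : (m : ℕ) + 1 ≤ t)) p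

end Paper
end TFAux
noncomputable section TFKey
namespace Paper

open Polynomial

variable {K : Type} [Field K] {t : ℕ}

theorem key (ht : 1 ≤ t) {T : Submodule (Aus K t)ᵐᵒᵖ (Aus K t)} (hL : LeftStable K t T)
    (i' i j : Fin t) (hi : (i' : ℕ) + 1 = (i : ℕ)) (hj : (j : ℕ) < (i : ℕ))
    (y f : Aus K t) (hy : y ∈ Tpart K t T j) (hf : f ∈ Tpart K t T i)
    (hann : ∀ r : Aus K t, y * r = 0 → f * r = 0) :
    ∃ z ∈ Tpart K t T i', arrB K t i' i hi * z = f := by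
  classical
  obtain ⟨hyT, hye⟩ := mem_Tpart hL hy
  obtain ⟨hfT, hfe⟩ := mem_Tpart hL hf
  set R := Polynomial K
  set Y : Nmod K t →ₗ[R] Mq K t j := (LinearMap.proj j).comp (ev y) with hY
  set F : Nmod K t →ₗ[R] Mq K t i := (LinearMap.proj i).comp (ev f) with hF
  have hyv : ∀ v, ev y v = Pi.single j (Y v) := fun v => row_rep hye v
  have hfv : ∀ v, ev f v = Pi.single i (F v) := fun v => row_rep hfe v
  -- kernel inclusion
  have hker : ∀ v : Nmod K t, Y v = 0 → F v = 0 := by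
    intro n hn
    have hyn : ev y n = 0 := by rw [hyv n, hn, Pi.single_zero]
    set τ : Fin t := ⟨t - 1, by omega⟩ with hτ
    have hτ1 : (τ : ℕ) + 1 = t := by simp [hτ]; omega
    have hspan : (Ideal.span ({X ^ ((τ : ℕ) + 1)} : Set R)) ≤
        LinearMap.ker (LinearMap.toSpanSingleton R (Nmod K t) n) := by
      rw [Ideal.span_le]
      rintro p hp
      rw [Set.mem_singleton_iff] at hp
      subst hp
      rw [SetLike.mem_coe, LinearMap.mem_ker, LinearMap.toSpanSingleton_apply, hτ1]
      exact xpow_smul_eq_zero n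
    set lm : Mq K t τ →ₗ[R] Nmod K t :=
      Submodule.liftQ _ (LinearMap.toSpanSingleton R (Nmod K t) n) hspan with hlm
    set r : Aus K t := lm.comp (LinearMap.proj τ) with hr
    have hyr : y * r = 0 := by
      apply LinearMap.ext
      intro v
      erw [Module.End.mul_apply, LinearMap.zero_apply]
      obtain ⟨p, hp⟩ := Submodule.Quotient.mk_surjective _ ((v : Nmod K t) τ)
      have h2 : ev r v = p • n := by
        show lm ((v : Nmod K t) τ) = p • n
        rw [← hp, Submodule.liftQ_apply, LinearMap.toSpanSingleton_apply]
      show ev y (ev r v) = 0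
      rw [h2, map_smul]
      have : ev y n = 0 := hyn
      rw [this, smul_zero]
    have hfr := hann r hyr
    have hev := LinearMap.congr_fun hfr (Pi.single τ (Submodule.Quotient.mk (1 : R)))
    erw [Module.End.mul_apply, LinearMap.zero_apply] at hev
    have h3 : ev r (Pi.single τ (Submodule.Quotient.mk (1 : R))) = n := by
      show lm ((Pi.single τ (Submodule.Quotient.mk (1 : R)) : Nmod K t) τ) = n
      rw [Pi.single_eq_same, Submodule.liftQ_apply, LinearMap.toSpanSingleton_apply, one_smul]
    have h4 : ev f n = 0 := by
      rw [← h3]; exact hev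
    rw [hF]
    show (ev f n) i = 0
    rw [h4]
    rfl
  -- the ideal of the image of Y
  set Ij : Ideal R :=
    Submodule.comap (Ideal.span ({X ^ ((j : ℕ) + 1)} : Set R)).mkQ (LinearMap.range Y) with hIj
  haveI hPrin : Ij.IsPrincipal := IsPrincipalIdealRing.principal Ij
  have hXj : (X : R) ^ ((j : ℕ) + 1) ∈ Ij := by
    rw [hIj, Submodule.mem_comap, Submodule.mkQ_apply]
    have : (Submodule.Quotient.mk ((X : R) ^ ((j : ℕ) + 1)) :
        Polynomial K ⧸ Ideal.span ({X ^ ((j : ℕ) + 1)} : Set R)) = 0 :=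
      (Submodule.Quotient.mk_eq_zero _).2 (Ideal.subset_span (Set.mem_singleton _))
    rw [this]
    exact zero_mem _
  obtain ⟨s, hs_le, hassoc⟩ :=
    (dvd_prime_pow Polynomial.prime_X _).1
      ((Submodule.IsPrincipal.mem_iff_generator_dvd Ij).1 hXj)
  have hXs : (X : R) ^ s ∈ Ij :=
    (Submodule.IsPrincipal.mem_iff_generator_dvd Ij).2 hassoc.dvd
  obtain ⟨n₀, hn₀⟩ : ∃ n₀, Y n₀ = Submodule.Quotient.mk ((X : R) ^ s) := by
    rw [hIj, Submodule.mem_comap, Submodule.mkQ_apply] at hXs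
    obtain ⟨n₀, hn₀⟩ := hXs
    exact ⟨n₀, hn₀⟩
  have hrep : ∀ v : Nmod K t, ∃ p : R, Y v = Submodule.Quotient.mk ((X : R) ^ s * p) := by
    intro v
    obtain ⟨q, hq⟩ := Submodule.Quotient.mk_surjective _ (Y v)
    have hqI : q ∈ Ij := by
      rw [hIj, Submodule.mem_comap, Submodule.mkQ_apply, hq]
      exact ⟨v, rfl⟩
    have hdvd : (X : R) ^ s ∣ q :=
      dvd_trans hassoc.symm.dvd ((Submodule.IsPrincipal.mem_iff_generator_dvd Ij).1 hqI)
    obtain ⟨p, rfl⟩ := hdvd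
    exact ⟨p, hq.symm⟩
  have htrans : ∀ (v : Nmod K t) (p : R),
      Y v = Submodule.Quotient.mk ((X : R) ^ s * p) → F v = p • F n₀ := by
    intro v p hp
    have h0 : Y (v - p • n₀) = 0 := by
      rw [map_sub, map_smul, hn₀, hp, ← Submodule.Quotient.mk_smul, smul_eq_mul, mul_comm]
      exact sub_self _
    have := hker _ h0
    rw [map_sub, map_smul] at this
    exact sub_eq_zero.1 this
  -- annihilator of ω = F n₀
  have hω : (X : R) ^ ((j : ℕ) + 1 - s) • F n₀ = 0 := by
    have h0 : Y ((X : R) ^ ((j : ℕ) + 1 - s) • n₀) = 0 := by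
      rw [map_smul, hn₀, ← Submodule.Quotient.mk_smul, Submodule.Quotient.mk_eq_zero, smul_eq_mul,
        Ideal.mem_span_singleton, ← pow_add]
      exact pow_dvd_pow _ (by omega)
    have := hker _ h0
    rwa [map_smul] at this
  obtain ⟨Wp, hWp⟩ := Submodule.Quotient.mk_surjective _ (F n₀)
  rw [← hWp, ← Submodule.Quotient.mk_smul, Submodule.Quotient.mk_eq_zero, smul_eq_mul,
    Ideal.mem_span_singleton] at hω
  obtain ⟨h, hh⟩ := hω
  have hWp2 : Wp = (X : R) ^ ((i : ℕ) - (j : ℕ) + s) * h := by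
    have hcan : (X : R) ^ ((j : ℕ) + 1 - s) ≠ 0 := pow_ne_zero _ Polynomial.X_ne_zero
    apply mul_left_cancel₀ hcan
    rw [hh, ← mul_assoc, ← pow_add]
    congr 2
    omega
  -- the dividing map U
  have hUcond : Ideal.span ({X ^ ((j : ℕ) + 1)} : Set R) ≤
      Submodule.comap (LinearMap.mulLeft R ((X : R) ^ ((i : ℕ) - (j : ℕ) - 1) * h))
        (Ideal.span ({X ^ ((i' : ℕ) + 1)} : Set R)) := by
    rw [Ideal.span_le]
    rintro p hp
    rw [Set.mem_singleton_iff] at hp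
    subst hp
    rw [SetLike.mem_coe, Submodule.mem_comap, LinearMap.mulLeft_apply, Ideal.mem_span_singleton]
    refine ⟨h, ?_⟩
    have he : ((i' : ℕ) + 1) = ((i : ℕ) - (j : ℕ) - 1) + ((j : ℕ) + 1) := by omega
    rw [he, pow_add]
    ring
  set U : Mq K t j →ₗ[R] Mq K t i' :=
    Submodule.mapQ _ _ (LinearMap.mulLeft R ((X : R) ^ ((i : ℕ) - (j : ℕ) - 1) * h)) hUcond
    with hU
  set u : Aus K t := (LinearMap.single R (Mq K t) i').comp (U.comp (LinearMap.proj j)) with hu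
  have hidemu : idem K t i' * u = u := by
    apply LinearMap.ext
    intro v
    erw [Module.End.mul_apply]
    show Pi.single i' ((Pi.single i' (U (v j)) : Nmod K t) i') = Pi.single i' (U (v j))
    rw [Pi.single_eq_same]
  refine ⟨u * y, ?_, ?_⟩
  · refine Submodule.mem_map.2 ⟨u * y, hL _ _ hyT, ?_⟩
    show idem K t i' * (u * y) = u * y
    rw [← mul_assoc, hidemu]
  · apply LinearMap.ext
    intro v
    erw [Module.End.mul_apply, Module.End.mul_apply]
    obtain ⟨p, hp⟩ := hrep v
    have h1 : ev y v = Pi.single j (Y v) := hyv v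
    have h2 : ev u (Pi.single j (Y v)) = Pi.single i' (U (Y v)) := by
      show Pi.single i' (U ((Pi.single j (Y v) : Nmod K t) j)) = Pi.single i' (U (Y v))
      rw [Pi.single_eq_same]
    have h3 : ev (arrB K t i' i hi) (Pi.single i' (U (Y v))) =
        Pi.single i (xmulStep K t i' i hi (U (Y v))) := by
      show Pi.single i (xmulStep K t i' i hi ((Pi.single i' (U (Y v)) : Nmod K t) i')) = _
      rw [Pi.single_eq_same]
    show ev (arrB K t i' i hi) (ev u (ev y v)) = ev f v
    rw [h1, h2, h3, hfv v]
    refine congrArg _ ?_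
    -- xmulStep (U (Y v)) = F v
    rw [hp]
    have h4 : U (Submodule.Quotient.mk ((X : R) ^ s * p)) =
        Submodule.Quotient.mk (((X : R) ^ ((i : ℕ) - (j : ℕ) - 1) * h) * ((X : R) ^ s * p)) :=
      Submodule.mapQ_apply _ _ _ _
    have h5 : xmulStep K t i' i hi
        (Submodule.Quotient.mk (((X : R) ^ ((i : ℕ) - (j : ℕ) - 1) * h) * ((X : R) ^ s * p))) =
        Submodule.Quotient.mk ((X : R) *
          (((X : R) ^ ((i : ℕ) - (j : ℕ) - 1) * h) * ((X : R) ^ s * p))) :=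
      Submodule.mapQ_apply _ _ _ _
    rw [h4, h5, htrans v p hp, ← hWp, ← Submodule.Quotient.mk_smul, hWp2, smul_eq_mul]
    refine congrArg _ ?_
    have hexp : (i : ℕ) - (j : ℕ) + s = 1 + ((i : ℕ) - (j : ℕ) - 1) + s := by omega
    rw [hexp, pow_add, pow_add, pow_one]
    ring

end Paper
end TFKey
noncomputable section TFGlue
namespace Paper

open Polynomial

variable {K : Type} [Field K] {t : ℕ}

theorem xmulStep_ker {j i : Fin t} (h : (j : ℕ) + 1 = (i : ℕ)) (q : Mq K t j)
    (hq : xmulStep K t j i h q = 0) : q = 0 := by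
  obtain ⟨p, rfl⟩ := Submodule.Quotient.mk_surjective _ q
  rw [show xmulStep K t j i h (Submodule.Quotient.mk p) =
        Submodule.Quotient.mk ((Polynomial.X : Polynomial K) * p) from
      Submodule.mapQ_apply _ _ _ _,
    Submodule.Quotient.mk_eq_zero, Ideal.mem_span_singleton] at hq
  obtain ⟨c, hc⟩ := hq
  rw [Submodule.Quotient.mk_eq_zero, Ideal.mem_span_singleton]
  refine ⟨c, ?_⟩
  have h2 : (Polynomial.X : Polynomial K) * p =
      Polynomial.X * (Polynomial.X ^ ((j : ℕ) + 1) * c) := by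
    rw [hc, ← h, pow_succ]
    ring
  exact mul_left_cancel₀ Polynomial.X_ne_zero h2

theorem arrB_ker {i' i : Fin t} (hii : (i' : ℕ) + 1 = (i : ℕ)) (v : Aus K t)
    (hv : idem K t i' * v = v) (h0 : arrB K t i' i hii * v = 0) : v = 0 := by
  apply LinearMap.ext
  intro m
  have h1 := LinearMap.congr_fun h0 m
  erw [Module.End.mul_apply, LinearMap.zero_apply] at h1
  have h2 : ev (arrB K t i' i hii) (ev v m) =
      Pi.single i (xmulStep K t i' i hii ((ev v m) i')) := by
    conv_lhs => rw [row_rep hv m]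
    show Pi.single i (xmulStep K t i' i hii
      ((Pi.single i' ((ev v m) i') : Nmod K t) i')) = _
    rw [Pi.single_eq_same]
  have h3 : ev (arrB K t i' i hii) (ev v m) = 0 := h1
  rw [h2] at h3
  have h4 := congr_fun h3 i
  rw [Pi.single_eq_same] at h4
  have h5 : (ev v m) i' = 0 := xmulStep_ker hii _ h4
  show ev v m = 0
  rw [row_rep hv m, h5, Pi.single_zero]

end Paper
end TFGlue
open CategoryTheory CategoryTheory.Limits Paper in
/-- The quasi-hereditary decomposition of a basic tilting `A_t`-module is TF-ordered:
`T_i ∉ Gen(⊕_(j<i) T_j)` for all `i ≥ 2`. -/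
theorem stmt7 (K : Type) [Field K] [IsAlgClosed K] (t : ℕ) (ht : 2 ≤ t)
    (T : Submodule (Aus K t)ᵐᵒᵖ (Aus K t)) (hL : LeftStable K t T)
    (hTilt : IsBasicTiltingFam K (Aus K t) (fun i => Tobj K t T i)) :
    TFOrdered K (Aus K t) (fun i => Tobj K t T i) := by
  intro i hi1 hInGen
  obtain ⟨n, g, hepi⟩ := hInGen
  have hilt : (i : ℕ) < t := i.isLt
  set i' : Fin t := ⟨(i : ℕ) - 1, by omega⟩ with hi'def
  have hii : (i' : ℕ) + 1 = (i : ℕ) := by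
    show (i : ℕ) - 1 + 1 = (i : ℕ)
    omega
  set bmap : Aus K t := arrB K t i' i hii with hbmap
  have hcl : ∀ x ∈ Tpart K t T i', (lmul K t bmap) x ∈ Tpart K t T i := by
    intro x hx
    obtain ⟨hxT, _⟩ := Paper.mem_Tpart hL hx
    refine Submodule.mem_map.2 ⟨bmap * x, hL _ _ hxT, ?_⟩
    show idem K t i * (bmap * x) = bmap * x
    rw [← mul_assoc, hbmap, idem_mul_arrB]
  set hm : ↥(Tpart K t T i') →ₗ[(Aus K t)ᵐᵒᵖ] ↥(Tpart K t T i) :=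
    (lmul K t bmap).restrict hcl with hhm
  have hinj : Function.Injective hm := by
    intro z₁ z₂ hz
    have hz' : bmap * (z₁ : Aus K t) = bmap * (z₂ : Aus K t) := congrArg Subtype.val hz
    have hd0 : bmap * ((z₁ : Aus K t) - (z₂ : Aus K t)) = 0 := by
      rw [mul_sub, hz', sub_self]
    have hdmem : ((z₁ : Aus K t) - (z₂ : Aus K t)) ∈ Tpart K t T i' := sub_mem z₁.2 z₂.2
    have hde := (Paper.mem_Tpart hL hdmem).2
    have hd : ((z₁ : Aus K t) - (z₂ : Aus K t)) = 0 := Paper.arrB_ker hii _ hde hd0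
    exact Subtype.ext (sub_eq_zero.1 hd)
  set Dfam : Fin (i : ℕ) → Mod' K (Aus K t) :=
    fun k => Tobj K t T (Fin.castLE i.isLt.le k) with hDfam
  have hsurj : Function.Surjective hm := by
    have hgs : Function.Surjective g := (ModuleCat.epi_iff_surjective g).1 hepi
    have hmem : ∀ w, g w ∈ LinearMap.range hm := by
      intro w
      have hw1 : w = ∑ p : Fin n, Pi.single p (w p) := (Finset.univ_sum_single w).symm
      rw [hw1, map_sum]
      apply Submodule.sum_mem
      intro p _
      -- decompose w p over the biproduct
      have happ : ∀ x : ↑(⨁ Dfam),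
          x = ∑ k : Fin (i : ℕ), (biproduct.ι Dfam k) ((biproduct.π Dfam k) x) := by
        intro x
        have h2 := congrArg (fun φ : (⨁ Dfam) ⟶ (⨁ Dfam) => φ x) (biproduct.total (f := Dfam))
        simp only at h2
        change ModuleCat.Hom.hom _ x = _ at h2
        rw [ModuleCat.hom_sum, LinearMap.sum_apply] at h2
        convert h2.symm using 2 <;> rfl
      have hps : (Pi.single p (w p) : Fin n → ↑(⨁ Dfam)) =
          ∑ k : Fin (i : ℕ),
            Pi.single p ((biproduct.ι Dfam k) ((biproduct.π Dfam k) (w p))) := by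
        conv_lhs => rw [happ (w p)]
        exact map_sum (LinearMap.single ((Aus K t)ᵐᵒᵖ) (fun _ : Fin n => ↑(⨁ Dfam)) p) _ _
      have hg : g.hom (Pi.single p (w p)) = ∑ k : Fin (i : ℕ),
          g.hom (Pi.single p ((biproduct.ι Dfam k) ((biproduct.π Dfam k) (w p)))) := by
        exact (congrArg g.hom hps).trans (map_sum _ _ _)
      refine (congrArg (· ∈ LinearMap.range hm) hg).mpr ?_
      apply Submodule.sum_mem
      intro k _
      set jk : Fin t := Fin.castLE i.isLt.le k with hjkdef
      have hjk : (jk : ℕ) < (i : ℕ) := k.isLt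
      set vv : ↥(Tpart K t T jk) := (biproduct.π Dfam k) (w p) with hvv
      set χ : ↥(Tpart K t T jk) →ₗ[(Aus K t)ᵐᵒᵖ] ↥(Tpart K t T i) :=
        (g.hom.comp ((LinearMap.single ((Aus K t)ᵐᵒᵖ) (fun _ : Fin n => ↑(⨁ Dfam)) p).comp
          (biproduct.ι Dfam k).hom)) with hχ
      have hχv : g (Pi.single p ((biproduct.ι Dfam k) vv)) = χ vv := rfl
      rw [hχv]
      have hann : ∀ r : Aus K t, (vv : Aus K t) * r = 0 →
          ((χ vv : ↥(Tpart K t T i)) : Aus K t) * r = 0 := by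
        intro r hr
        have hsm : (MulOpposite.op r) • vv = (0 : ↥(Tpart K t T jk)) := by
          apply Subtype.ext
          rw [Submodule.coe_smul, MulOpposite.smul_eq_mul_unop, MulOpposite.unop_op, hr]
          simp
        have h6 : (MulOpposite.op r) • (χ vv) = 0 := by rw [← map_smul, hsm, map_zero]
        have h7 := congrArg Subtype.val h6
        rw [Submodule.coe_smul, MulOpposite.smul_eq_mul_unop, MulOpposite.unop_op] at h7
        simpa using h7
      obtain ⟨z, hzmem, hz⟩ := Paper.key (show 1 ≤ t by omega) hL i' i jk hii hjk
        (vv : Aus K t) ((χ vv : ↥(Tpart K t T i)) : Aus K t) vv.2 (χ vv).2 hann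
      exact ⟨⟨z, hzmem⟩, Subtype.ext hz⟩
    intro m
    obtain ⟨w, hw⟩ := hgs m
    obtain ⟨z, hz⟩ := hmem w
    exact ⟨z, by rw [hz, hw]⟩
  have hne : i' ≠ i := by
    intro h
    rw [h] at hii
    omega
  have hiso : Nonempty ((fun i => Tobj K t T i) i' ≅ (fun i => Tobj K t T i) i) :=
    ⟨LinearEquiv.toModuleIso (LinearEquiv.ofBijective hm ⟨hinj, hsurj⟩)⟩
  exact hTilt.2.2 i' i hne hiso
end
end
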